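/- arXiv:1304.6605 — 7 statements merged into one kernel-verified Lean document; each statement's English description precedes it below -/
import Mathlib

section
/- Let g : 𝔻 → ℂ be holomorphic with g(ζ) = g(0) − conj(g(0))·ζ² − ζ·q(ζ), Re q ≥ 0 on 𝔻. If Re g'(0) = 0, then g(ζ) = g(0) − conj(g(0))·ζ² + i·a·ζ for some real a; in particular all Taylor coefficients of g of order ≥ 3 vanish and the second coefficient equals −conj(g(0)). -/
/-!
Since `g'(0) = -q(0)`, the hypothesis says that `Re q` attains its minimum `0` at the origin.
By the open mapping theorem a nonconstant holomorphic `q` cannot map a neighbourhood of `0` into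
the closed right half-plane while sending `0` to its boundary, so `q ≡ q(0) = -i a` is constant
and `g` is the quadratic polynomial `g(0) + i a ζ - conj(g(0)) ζ²`.
-/

open Complex Metric Filter Topology

theorem AnalyticOnNhd.eqOn_const_of_re_nonneg {f : ℂ → ℂ} {U : Set ℂ} {z₀ : ℂ}
    (hf : AnalyticOnNhd ℂ f U) (hU : IsPreconnected U) (hz₀ : U ∈ 𝓝 z₀)
    (hre : ∀ z ∈ U, 0 ≤ (f z).re) (hre₀ : (f z₀).re = 0) :
    Set.EqOn f (fun _ ↦ f z₀) U := by
  have hz₀U : z₀ ∈ U := mem_of_mem_nhds hz₀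
  rcases (hf z₀ hz₀U).eventually_constant_or_nhds_le_map_nhds with hconst | hopen
  · exact hf.eqOn_of_preconnected_of_eventuallyEq analyticOnNhd_const hU hz₀U hconst
  · have hmem : {w : ℂ | 0 ≤ w.re} ∈ 𝓝 (f z₀) :=
      hopen (mem_map.2 (mem_of_superset hz₀ hre))
    have := interior_setOfPred_le_re (0 : ℝ) ▸ mem_interior_iff_mem_nhds.2 hmem
    exact absurd hre₀ (ne_of_gt this)

section

variable {𝕜 : Type*} [NontriviallyNormedField 𝕜]

theorem hasDerivAt_const_sub_mul_sq_sub_mul {q : 𝕜 → 𝕜} (hq : DifferentiableAt 𝕜 q 0)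
    (a c : 𝕜) :
    HasDerivAt (fun z ↦ a - c * z ^ 2 - z * q z) (-q 0) 0 :=
  (((hasDerivAt_const (0 : 𝕜) a).sub ((hasDerivAt_pow 2 (0 : 𝕜)).const_mul c)).sub
    ((hasDerivAt_id (0 : 𝕜)).mul hq.hasDerivAt)).congr_deriv (by simp)

theorem iteratedDeriv_quadratic_zero (a b c : 𝕜) (n : ℕ) :
    iteratedDeriv n (fun z ↦ a + b * z + c * z ^ 2) 0 =
      if n = 0 then a else if n = 1 then b else if n = 2 then 2 * c else 0 := by
  rw [iteratedDeriv_fun_add (by fun_prop) (by fun_prop),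
    iteratedDeriv_fun_add (by fun_prop) (by fun_prop), iteratedDeriv_const_mul_field,
    iteratedDeriv_const_mul_field, iteratedDeriv_fun_id_zero, iteratedDeriv_fun_pow_zero,
    iteratedDeriv_const]
  rcases n with _ | _ | _ | n <;> simp [mul_comm]

end

theorem stmt3_general (g q : ℂ → ℂ)
    (hq : DifferentiableOn ℂ q (ball 0 1))
    (hrep : ∀ ζ ∈ ball (0:ℂ) 1, g ζ = g 0 - (starRingEnd ℂ) (g 0) * ζ ^ 2 - ζ * q ζ)
    (hre : ∀ ζ ∈ ball (0:ℂ) 1, 0 ≤ (q ζ).re)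
    (h0 : (deriv g 0).re = 0) :
    (∃ a : ℝ, ∀ ζ ∈ ball (0:ℂ) 1,
        g ζ = g 0 - (starRingEnd ℂ) (g 0) * ζ ^ 2 + Complex.I * a * ζ) ∧
    (∀ j, 3 ≤ j → iteratedDeriv j g 0 = 0) ∧
    iteratedDeriv 2 g 0 / 2 = -(starRingEnd ℂ) (g 0) := by
  set c := (starRingEnd ℂ) (g 0)
  have hball : ball (0 : ℂ) 1 ∈ 𝓝 0 := ball_mem_nhds 0 one_pos
  have hq_an : AnalyticOnNhd ℂ q (ball 0 1) := hq.analyticOnNhd isOpen_ball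
  have hg_deriv : deriv g 0 = -q 0 := by
    rw [(eventuallyEq_of_mem hball hrep).deriv_eq]
    exact (hasDerivAt_const_sub_mul_sq_sub_mul (hq_an 0 (mem_of_mem_nhds hball)).differentiableAt
      (g 0) c).deriv
  have hq_re : (q 0).re = 0 := by simpa [hg_deriv] using h0
  have hq_im : -q 0 = I * ((-(q 0).im : ℝ) : ℂ) := by apply Complex.ext <;> simp [hq_re]
  have hq_const := hq_an.eqOn_const_of_re_nonneg (convex_ball 0 1).isPreconnected hball hre hq_re
  have hg_quad : ∀ ζ ∈ ball (0 : ℂ) 1, g ζ = g 0 + -q 0 * ζ + -c * ζ ^ 2 := by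
    intro ζ hζ
    rw [hrep ζ hζ, hq_const hζ]; ring
  have hg_iter (n : ℕ) := (eventuallyEq_of_mem hball hg_quad).iteratedDeriv_eq n
  refine ⟨⟨-(q 0).im, fun ζ hζ ↦ ?_⟩, fun j hj ↦ ?_, ?_⟩
  · rw [hg_quad ζ hζ, hq_im]; ring
  · rw [hg_iter, iteratedDeriv_quadratic_zero, if_neg (by omega), if_neg (by omega),
      if_neg (by omega)]
  · rw [hg_iter, iteratedDeriv_quadratic_zero, if_neg two_ne_zero, if_neg (by norm_num),
      if_pos rfl]
    ring

theorem stmt3 (g q : ℂ → ℂ)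
    (hg : DifferentiableOn ℂ g (ball 0 1))
    (hq : DifferentiableOn ℂ q (ball 0 1))
    (hrep : ∀ ζ ∈ ball (0:ℂ) 1, g ζ = g 0 - (starRingEnd ℂ) (g 0) * ζ ^ 2 - ζ * q ζ)
    (hre : ∀ ζ ∈ ball (0:ℂ) 1, 0 ≤ (q ζ).re)
    (h0 : (deriv g 0).re = 0) :
    (∃ a : ℝ, ∀ ζ ∈ ball (0:ℂ) 1,
        g ζ = g 0 - (starRingEnd ℂ) (g 0) * ζ ^ 2 + Complex.I * a * ζ) ∧
    (∀ j, 3 ≤ j → iteratedDeriv j g 0 = 0) ∧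
    iteratedDeriv 2 g 0 / 2 = -(starRingEnd ℂ) (g 0) :=
  stmt3_general g q hq hrep hre h0
end

section
/- Let X be a complex Banach space with open unit ball B, and let G : B → X be holomorphic satisfying Re⟨G(z), z*⟩ ≤ Re⟨G(0), z*⟩·(1 − ‖z‖²) for all z ∈ B and all supporting functionals z* (with ⟨z, z*⟩ = ‖z‖² = ‖z*‖²). Then for every unit vector v ∈ X and every v* ∈ X* with ⟨v, v*⟩ = ‖v*‖ = 1, one has Re⟨DG(0)v, v*⟩ ≤ 0. -/
open Complex Metric Filter Topology Set

/-!
Restrict everything to the ray `r ↦ r • v`. Since `(r : ℂ) • v*` supports `r • v`, the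
generator inequality reads `g r ≤ g 0 * (1 - r ^ 2)` for `g r = Re ⟨G (r • v), v*⟩` and
`0 ≤ r < 1`. So `r ↦ g r + g 0 * r ^ 2` has a one-sided local maximum at `0`, and by Fermat's
theorem its right derivative `Re ⟨DG(0) v, v*⟩` is nonpositive.
-/

lemma HasDerivWithinAt.nonpos_of_le_add_mul_sq {g : ℝ → ℝ} {g' c ε : ℝ}
    (hg : HasDerivWithinAt g g' (Ici 0) 0) (hε : 0 < ε)
    (hle : ∀ r ∈ Ico 0 ε, g r ≤ g 0 + c * r ^ 2) : g' ≤ 0 := by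
  have hmax : IsLocalMaxOn (fun r => g r - c * r ^ 2) (Ici 0) 0 := by
    refine mem_of_superset (inter_mem_nhdsWithin (Ici 0) (Iio_mem_nhds hε)) fun r hr => ?_
    have := hle r hr
    simp only [mem_ofPred_eq]
    linarith
  have hderiv : HasDerivWithinAt (fun r => g r - c * r ^ 2) g' (Ici 0) 0 :=
    (hg.sub ((hasDerivAt_pow 2 (0 : ℝ)).const_mul c).hasDerivWithinAt).congr_deriv (by simp)
  have hone : (1 : ℝ) ∈ posTangentConeAt (Ici 0) 0 :=
    one_mem_posTangentConeAt_iff_frequently.2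
      (eventually_nhdsWithin_of_forall (s := Ioi 0) fun _ hr => le_of_lt hr).frequently
  simpa using hmax.hasFDerivWithinAt_nonpos hderiv.hasFDerivWithinAt hone

section SupportingFunctional

variable {X : Type*} [NormedAddCommGroup X] [NormedSpace ℂ X]

def IsSupportingFunctional (z : X) (zs : X →L[ℂ] ℂ) : Prop :=
  zs z = (‖z‖ ^ 2 : ℂ) ∧ ‖zs‖ = ‖z‖

lemma IsSupportingFunctional.smul_of_nonneg {z : X} {zs : X →L[ℂ] ℂ} {r : ℝ}
    (h : IsSupportingFunctional z zs) (hr : 0 ≤ r) :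
    IsSupportingFunctional (r • z) ((r : ℂ) • zs) := by
  have hnorm : ‖r • z‖ = r * ‖z‖ := by rw [norm_smul, Real.norm_of_nonneg hr]
  refine ⟨?_, ?_⟩
  · rw [smul_apply, ContinuousLinearMap.map_smul_of_tower, h.1, hnorm, real_smul]
    push_cast
    ring
  · rw [norm_smul, h.2, hnorm, Complex.norm_real, Real.norm_of_nonneg hr]

lemma re_apply_comp_smul_le {G : X → X} {v : X} {vs : X →L[ℂ] ℂ} {r : ℝ}
    (hgen : ∀ z ∈ ball (0 : X) 1, ∀ zs : X →L[ℂ] ℂ, IsSupportingFunctional z zs →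
      (zs (G z)).re ≤ (zs (G 0)).re * (1 - ‖z‖ ^ 2))
    (hv : ‖v‖ = 1) (hvs : IsSupportingFunctional v vs) (hr0 : 0 ≤ r) (hr1 : r < 1) :
    (vs (G (r • v))).re ≤ (vs (G 0)).re * (1 - r ^ 2) := by
  rcases hr0.eq_or_lt with rfl | hr
  · simp
  have hnorm : ‖r • v‖ = r := by rw [norm_smul, hv, Real.norm_of_nonneg hr0, mul_one]
  have hmem : r • v ∈ ball (0 : X) 1 := by rwa [mem_ball_zero_iff, hnorm]
  have h := hgen (r • v) hmem _ (hvs.smul_of_nonneg hr0)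
  simp only [smul_apply, hnorm, smul_eq_mul, re_ofReal_mul] at h
  exact le_of_mul_le_mul_left (h.trans_eq (mul_assoc _ _ _)) hr

end SupportingFunctional

lemma HasFDerivAt.hasDerivAt_re_apply_comp_smul {X Y : Type*} [NormedAddCommGroup X]
    [NormedSpace ℂ X] [NormedAddCommGroup Y] [NormedSpace ℂ Y] {G : X → Y} {L : X →L[ℂ] Y}
    (hG : HasFDerivAt G L 0) (ys : Y →L[ℂ] ℂ) (v : X) :
    HasDerivAt (fun r : ℝ => (ys (G (r • v))).re) (ys (L v)).re 0 := by
  have hray : HasDerivAt (fun r : ℝ => r • v) v 0 := by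
    simpa using (hasDerivAt_id (0 : ℝ)).smul_const v
  have hcomp : HasFDerivAt (fun z => (ys (G z)).re)
      (reCLM.comp ((ys.comp L).restrictScalars ℝ)) ((0 : ℝ) • v) := by
    rw [zero_smul]
    exact reCLM.hasFDerivAt.comp 0 ((ys.hasFDerivAt.comp 0 hG).restrictScalars ℝ)
  simpa [Function.comp_def] using hcomp.comp_hasDerivAt 0 hray

theorem stmt4_general {X : Type*} [NormedAddCommGroup X] [NormedSpace ℂ X]
    (G : X → X) (hG : DifferentiableOn ℂ G (ball 0 1))
    (hgen : ∀ z ∈ ball (0:X) 1, ∀ zs : X →L[ℂ] ℂ,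
      zs z = (‖z‖ ^ 2 : ℂ) → ‖zs‖ = ‖z‖ →
      (zs (G z)).re ≤ (zs (G 0)).re * (1 - ‖z‖ ^ 2)) :
    ∀ v : X, ‖v‖ = 1 → ∀ vs : X →L[ℂ] ℂ, vs v = 1 → ‖vs‖ = 1 →
      (vs (fderiv ℂ G 0 v)).re ≤ 0 := by
  intro v hv vs hvsv hvs
  have hsupp : IsSupportingFunctional v vs := ⟨by simp [hvsv, hv], by rw [hvs, hv]⟩
  have hdiff : DifferentiableAt ℂ G 0 :=
    hG.differentiableAt (isOpen_ball.mem_nhds (mem_ball_self one_pos))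
  refine (hdiff.hasFDerivAt.hasDerivAt_re_apply_comp_smul vs v).hasDerivWithinAt
    |>.nonpos_of_le_add_mul_sq (c := -(vs (G 0)).re) one_pos fun r hr => ?_
  have hray := re_apply_comp_smul_le (fun z hz zs h => hgen z hz zs h.1 h.2) hv hsupp hr.1 hr.2
  simp only [zero_smul]
  linarith

theorem stmt4 {X : Type*} [NormedAddCommGroup X] [NormedSpace ℂ X] [CompleteSpace X]
    (G : X → X) (hG : DifferentiableOn ℂ G (ball 0 1))
    (hgen : ∀ z ∈ ball (0:X) 1, ∀ zs : X →L[ℂ] ℂ,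
      zs z = (‖z‖ ^ 2 : ℂ) → ‖zs‖ = ‖z‖ →
      (zs (G z)).re ≤ (zs (G 0)).re * (1 - ‖z‖ ^ 2)) :
    ∀ v : X, ‖v‖ = 1 → ∀ vs : X →L[ℂ] ℂ, vs v = 1 → ‖vs‖ = 1 →
      (vs (fderiv ℂ G 0 v)).re ≤ 0 :=
  stmt4_general G hG hgen
end

section
/- Let X be a complex Banach space with open unit ball B, and let G : B → X be an infinitesimal generator (i.e., Re⟨G(z), z*⟩ ≤ Re⟨G(0), z*⟩·(1−‖z‖²) for all z ∈ B). Fix a unit vector v ∈ X and a supporting functional v* with ⟨v, v*⟩ = 1 = ‖v*‖. Then the holomorphic function g : 𝔻 → ℂ, g(ζ) := ⟨G(ζv), v*⟩, is an infinitesimal generator on the unit disc; i.e., g(ζ) = g(0) − conj(g(0))ζ² − ζq(ζ) for some holomorphic q with Re q ≥ 0 on 𝔻. -/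
/-!
Set `g ζ = ⟨G(ζv), v*⟩`. Testing the generator inequality at `z = ζv` against the supporting
functional `conj ζ • v*` of `z` gives `Re(conj ζ · g ζ) ≤ Re(conj ζ · g 0)(1 - |ζ|²)`, which says
exactly that `f ζ := g 0 - conj (g 0) ζ² - g ζ` satisfies `Re(conj ζ · f ζ) ≥ 0`. Since `f 0 = 0`,
`q := f / ζ` (the divided slope at `0`) is holomorphic, and `Re q = Re(conj ζ · f ζ) / |ζ|² ≥ 0`
away from `0`, hence also at `0` by continuity.
-/

open Complex ComplexConjugate Metric Filter Topology

namespace Complex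

lemma re_div_eq_re_conj_mul_div_normSq (w z : ℂ) :
    (w / z).re = (conj z * w).re / normSq z := by
  rw [div_eq_mul_inv, inv_def, ← mul_assoc, mul_comm w, re_mul_ofReal, div_eq_mul_inv]

lemma re_conj_mul_sub_conj_mul_sq_sub (a w ζ : ℂ) :
    (conj ζ * (a - conj a * ζ ^ 2 - w)).re = (conj ζ * a).re * (1 - ‖ζ‖ ^ 2) - (conj ζ * w).re := by
  have hζ : conj ζ * (conj a * ζ ^ 2) = ((‖ζ‖ ^ 2 : ℝ) : ℂ) * conj (conj ζ * a) := by
    rw [ofReal_pow, ← conj_mul' ζ, map_mul, conj_conj]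
    ring
  rw [mul_sub, mul_sub, hζ, sub_re, sub_re, re_ofReal_mul, conj_re]
  ring

lemma re_dslope_zero_nonneg {f : ℂ → ℂ} {U : Set ℂ} (hU : U ∈ 𝓝 0)
    (hf : DifferentiableOn ℂ f U) (hf0 : f 0 = 0) (hre : ∀ ζ ∈ U, 0 ≤ (conj ζ * f ζ).re) :
    ∀ ζ ∈ U, 0 ≤ (dslope f 0 ζ).re := by
  have hpunct : ∀ ζ ∈ U, ζ ≠ 0 → 0 ≤ (dslope f 0 ζ).re := by
    intro ζ hζ hζ0
    rw [dslope_of_ne f hζ0, slope_def_field, sub_zero, hf0, sub_zero,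
      re_div_eq_re_conj_mul_div_normSq]
    exact div_nonneg (hre ζ hζ) (normSq_nonneg ζ)
  intro ζ hζ
  rcases eq_or_ne ζ 0 with rfl | hζ0
  · have hcont : ContinuousAt (fun z => (dslope f 0 z).re) 0 :=
      continuous_re.continuousAt.comp
        (((differentiableOn_dslope hU).mpr hf).differentiableAt hU).continuousAt
    refine ge_of_tendsto (hcont.tendsto.mono_left (nhdsWithin_le_nhds (s := {0}ᶜ))) ?_
    filter_upwards [nhdsWithin_le_nhds hU, self_mem_nhdsWithin] with z hzU hz0
    exact hpunct z hzU hz0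
  · exact hpunct ζ hζ hζ0

end Complex

lemma ContinuousLinearMap.conj_smul_supports_smul {X : Type*} [NormedAddCommGroup X]
    [NormedSpace ℂ X] {v : X} {vs : X →L[ℂ] ℂ} (hv : ‖v‖ = 1) (hvs1 : vs v = 1) (hvs2 : ‖vs‖ = 1)
    (ζ : ℂ) : (conj ζ • vs) (ζ • v) = (‖ζ • v‖ ^ 2 : ℂ) ∧ ‖conj ζ • vs‖ = ‖ζ • v‖ := by
  rw [norm_smul, norm_smul, hv, hvs2, smul_apply, map_smul, hvs1, smul_eq_mul, smul_eq_mul,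
    mul_one, mul_one, conj_mul', norm_conj]
  exact ⟨rfl, mul_one _⟩

theorem stmt5_general {X : Type*} [NormedAddCommGroup X] [NormedSpace ℂ X]
    (G : X → X) (hG : DifferentiableOn ℂ G (ball 0 1))
    (hgen : ∀ z ∈ ball (0:X) 1, ∀ zs : X →L[ℂ] ℂ,
      zs z = (‖z‖ ^ 2 : ℂ) → ‖zs‖ = ‖z‖ →
      (zs (G z)).re ≤ (zs (G 0)).re * (1 - ‖z‖ ^ 2))
    (v : X) (hv : ‖v‖ = 1) (vs : X →L[ℂ] ℂ) (hvs1 : vs v = 1) (hvs2 : ‖vs‖ = 1) :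
    ∃ q : ℂ → ℂ, DifferentiableOn ℂ q (ball 0 1) ∧
      (∀ ζ ∈ ball (0:ℂ) 1, 0 ≤ (q ζ).re) ∧
      ∀ ζ ∈ ball (0:ℂ) 1,
        vs (G (ζ • v)) = vs (G 0) - (starRingEnd ℂ) (vs (G 0)) * ζ ^ 2 - ζ * q ζ := by
  set f : ℂ → ℂ := fun ζ => vs (G 0) - conj (vs (G 0)) * ζ ^ 2 - vs (G (ζ • v)) with hf_def
  have hnorm (ζ : ℂ) : ‖ζ • v‖ = ‖ζ‖ := by rw [norm_smul, hv, mul_one]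
  have hmaps : Set.MapsTo (· • v) (ball (0:ℂ) 1) (ball (0:X) 1) := fun ζ hζ ↦ by
    simpa only [mem_ball_zero_iff, hnorm] using hζ
  have hf : DifferentiableOn ℂ f (ball 0 1) :=
    (differentiableOn_const _).sub ((differentiable_pow 2).const_mul _).differentiableOn |>.sub
      (vs.differentiable.comp_differentiableOn
        (hG.comp (differentiable_id.smul_const v).differentiableOn hmaps))
  have hf0 : f 0 = 0 := by simp [f]
  have hre : ∀ ζ ∈ ball (0:ℂ) 1, 0 ≤ (conj ζ * f ζ).re := by
    intro ζ hζ
    obtain ⟨happly, hnorm_eq⟩ := vs.conj_smul_supports_smul hv hvs1 hvs2 ζ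
    have hle := hgen _ (hmaps hζ) _ happly hnorm_eq
    simp only [smul_apply, smul_eq_mul, hnorm] at hle
    rw [hf_def, re_conj_mul_sub_conj_mul_sq_sub]
    linarith
  have hU : ball (0:ℂ) 1 ∈ 𝓝 0 := ball_mem_nhds 0 one_pos
  refine ⟨dslope f 0, (differentiableOn_dslope hU).mpr hf, re_dslope_zero_nonneg hU hf hf0 hre,
    fun ζ _ ↦ ?_⟩
  have hfactor : ζ * dslope f 0 ζ = f ζ := by simpa using sub_smul_dslope_of_zero hf0 ζ
  rw [hfactor]
  ring

theorem stmt5 {X : Type*} [NormedAddCommGroup X] [NormedSpace ℂ X] [CompleteSpace X]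
    (G : X → X) (hG : DifferentiableOn ℂ G (ball 0 1))
    (hgen : ∀ z ∈ ball (0:X) 1, ∀ zs : X →L[ℂ] ℂ,
      zs z = (‖z‖ ^ 2 : ℂ) → ‖zs‖ = ‖z‖ →
      (zs (G z)).re ≤ (zs (G 0)).re * (1 - ‖z‖ ^ 2))
    (v : X) (hv : ‖v‖ = 1) (vs : X →L[ℂ] ℂ) (hvs1 : vs v = 1) (hvs2 : ‖vs‖ = 1) :
    ∃ q : ℂ → ℂ, DifferentiableOn ℂ q (ball 0 1) ∧
      (∀ ζ ∈ ball (0:ℂ) 1, 0 ≤ (q ζ).re) ∧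
      ∀ ζ ∈ ball (0:ℂ) 1,
        vs (G (ζ • v)) = vs (G 0) - (starRingEnd ℂ) (vs (G 0)) * ζ ^ 2 - ζ * q ζ :=
  stmt5_general G hG hgen v hv vs hvs1 hvs2
end

section
/- Let g : 𝔻 → ℂ be holomorphic such that for some ε > 0 and b ∈ ℝ, Re(g(ζ)·conj(ζ)) ≤ b(1−|ζ|²) whenever 1−ε < |ζ| < 1. Then for every w ∈ 𝔻 and every r > 0, the equation ζ − w − r·g(ζ) = 0 has exactly one solution ζ ∈ 𝔻, and consequently g is an infinitesimal generator on 𝔻. -/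
/-!
For `f ζ = ζ - w - r g ζ` the boundary condition gives `0 < Re (f ζ * conj ζ)` whenever `|ζ|` is
close to `1`. On such a circle `|ζ| = s` the quotient `f ζ / ζ` stays in the slit plane, so
`log (f ζ / ζ)` is a primitive of `f' / f - 1 / ζ` there and `∮ f' / f = 2πi`; by the argument
principle `f` has exactly one zero in `|ζ| < s`, and none in `s ≤ |ζ| < 1`.

For the Berkson–Porta form take `q ζ = (g 0 - conj (g 0) ζ ^ 2 - g ζ) / ζ`. The boundary condition
bounds `Re q` from below by `-C (1 - |ζ| ^ 2) / |ζ| ^ 2` near the unit circle, and the maximum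
modulus principle for `exp (-q)` propagates `Re q ≥ 0` inside.
-/

open Complex Metric Set Filter Topology ComplexConjugate
open scoped Real

section ArgumentPrinciple

variable {U : Set ℂ} {f : ℂ → ℂ}

theorem DifferentiableOn.exists_eq_pow_mul (hf : DifferentiableOn ℂ f U) (hU : IsOpen U)
    (hU' : IsPreconnected U) {u x : ℂ} (hu : u ∈ U) (hx : x ∈ U) (hfx : f x ≠ 0) :
    ∃ (n : ℕ) (h : ℂ → ℂ), DifferentiableOn ℂ h U ∧ h u ≠ 0 ∧ ∀ z, f z = (z - u) ^ n * h z := by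
  obtain ⟨p, hp⟩ := hf.analyticAt (hU.mem_nhds hu)
  have hp0 : p ≠ 0 := fun h ↦ hfx <|
    (hf.analyticOnNhd hU).eqOn_zero_of_preconnected_of_eventuallyEq_zero hU' hu
      (hp.locally_zero_iff.2 h) hx
  refine ⟨p.order, (Function.swap dslope u)^[p.order] f, ?_, hp.iterate_dslope_fslope_ne_zero hp0,
    hp.eq_pow_order_mul_iterate_dslope⟩
  induction p.order with
  | zero => exact hf
  | succ n ih =>
    rw [Function.iterate_succ_apply']
    exact (differentiableOn_dslope (hU.mem_nhds hu)).2 ih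

theorem DifferentiableOn.finite_zeros_of_isCompact (hf : DifferentiableOn ℂ f U) (hU : IsOpen U)
    (hU' : IsPreconnected U) {x : ℂ} (hx : x ∈ U) (hfx : f x ≠ 0) {K : Set ℂ} (hK : IsCompact K)
    (hKU : K ⊆ U) : {z ∈ K | f z = 0}.Finite := by
  have := (hf.analyticOnNhd hU).preimage_zero_mem_codiscreteWithin hfx hx ⟨⟨x, hx⟩, hU'⟩
  have hfin := hK.finite_sdiff_of_mem_codiscreteWithin (codiscreteWithin_mono hKU this)
  exact hfin.subset fun z hz ↦ ⟨hz.1, fun h ↦ h hz.2⟩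

theorem DifferentiableOn.differentiableAt_logDeriv (hf : DifferentiableOn ℂ f U) (hU : IsOpen U)
    {z : ℂ} (hz : z ∈ U) (hfz : f z ≠ 0) : DifferentiableAt ℂ (logDeriv f) z :=
  ((hf.deriv hU).differentiableAt (hU.mem_nhds hz)).div (hf.differentiableAt (hU.mem_nhds hz)) hfz

variable {c : ℂ} {R : ℝ}

theorem DifferentiableOn.circleIntegrable_logDeriv (hf : DifferentiableOn ℂ f U) (hU : IsOpen U)
    (hR : 0 ≤ R) (hRU : sphere c R ⊆ U) (hf0 : ∀ z ∈ sphere c R, f z ≠ 0) :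
    CircleIntegrable (logDeriv f) c R :=
  ContinuousOn.circleIntegrable hR fun z hz ↦
    (hf.differentiableAt_logDeriv hU (hRU hz) (hf0 z hz)).continuousAt.continuousWithinAt

theorem DifferentiableOn.circleIntegral_logDeriv_eq_zero (hf : DifferentiableOn ℂ f U)
    (hU : IsOpen U) (hR : 0 ≤ R) (hRU : closedBall c R ⊆ U) (hball : ∀ z ∈ ball c R, f z ≠ 0)
    (hsph : ∀ z ∈ sphere c R, f z ≠ 0) : ∮ z in C(c, R), logDeriv f z = 0 := by
  have hf0 : ∀ z ∈ closedBall c R, f z ≠ 0 := by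
    rw [← ball_union_sphere]
    exact fun z hz ↦ hz.elim (hball z) (hsph z)
  have hd : ∀ z ∈ closedBall c R, DifferentiableAt ℂ (logDeriv f) z := fun z hz ↦
    hf.differentiableAt_logDeriv hU (hRU hz) (hf0 z hz)
  exact circleIntegral_eq_zero_of_differentiable_on_off_countable hR countable_empty
    (fun z hz ↦ (hd z hz).continuousAt.continuousWithinAt)
    fun z hz ↦ hd z (ball_subset_closedBall hz.1)

theorem DifferentiableOn.circleIntegral_logDeriv_pow_mul {h : ℂ → ℂ} (hh : DifferentiableOn ℂ h U)
    (hU : IsOpen U) (hRU : sphere c R ⊆ U) (hh0 : ∀ z ∈ sphere c R, h z ≠ 0) {u : ℂ}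
    (hu : u ∈ ball c R) (n : ℕ) :
    ∮ z in C(c, R), logDeriv (fun z ↦ (z - u) ^ n * h z) z
      = n * (2 * π * I) + ∮ z in C(c, R), logDeriv h z := by
  have hR : 0 ≤ R := dist_nonneg.trans (mem_ball.1 hu).le
  have hsplit : ∀ z ∈ sphere c R,
      logDeriv (fun z ↦ (z - u) ^ n * h z) z = n * (z - u)⁻¹ + logDeriv h z := by
    intro z hz
    have hzu : z - u ≠ 0 := sub_ne_zero.2 (sphere_disjoint_ball.ne_of_mem hz hu)
    rw [logDeriv_mul (f := fun z ↦ (z - u) ^ n) z (pow_ne_zero n hzu) (hh0 z hz) (by fun_prop)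
      (hh.differentiableAt (hU.mem_nhds (hRU hz))), logDeriv_fun_pow (by fun_prop)]
    simp [logDeriv_apply]
  have hinv : CircleIntegrable (fun z ↦ (n : ℂ) * (z - u)⁻¹) c R :=
    ContinuousOn.circleIntegrable hR <| continuousOn_const.mul fun z hz ↦
      ((continuousAt_id.sub continuousAt_const).inv₀
        (sub_ne_zero.2 (sphere_disjoint_ball.ne_of_mem hz hu))).continuousWithinAt
  rw [circleIntegral.integral_congr hR hsplit, circleIntegral.integral_add hinv
    (hh.circleIntegrable_logDeriv hU hR hRU hh0), circleIntegral.integral_const_mul,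
    circleIntegral.integral_sub_inv_of_mem_ball hu]

/-- `N` is the number of zeros in the disc counted with multiplicity. -/
theorem DifferentiableOn.exists_circleIntegral_logDeriv_eq_nat_mul (hf : DifferentiableOn ℂ f U)
    (hU : IsOpen U) (hU' : IsPreconnected U) (hR : 0 ≤ R) (hRU : closedBall c R ⊆ U)
    (hf0 : ∀ z ∈ sphere c R, f z ≠ 0) {Z : Finset ℂ} (hZ : {z ∈ ball c R | f z = 0} = Z) :
    ∃ N : ℕ, Z.card ≤ N ∧ ∮ z in C(c, R), logDeriv f z = N * (2 * π * I) := by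
  have hsph : sphere c R ⊆ U := sphere_subset_closedBall.trans hRU
  have hpt : c + R ∈ sphere c R := by simp [abs_of_nonneg hR]
  induction Z using Finset.induction_on generalizing f with
  | empty =>
    refine ⟨0, le_rfl, ?_⟩
    rw [Nat.cast_zero, zero_mul]
    refine hf.circleIntegral_logDeriv_eq_zero hU hR hRU (fun z hz hfz ↦ ?_) hf0
    exact (Finset.coe_empty ▸ hZ ▸ ⟨hz, hfz⟩ : z ∈ (∅ : Set ℂ))
  | insert u Z huZ ih =>
    have hu : u ∈ {z ∈ ball c R | f z = 0} := hZ ▸ Finset.mem_coe.2 (Finset.mem_insert_self u Z)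
    obtain ⟨n, h, hh, hhu, hfh⟩ := hf.exists_eq_pow_mul hU hU' (hRU (ball_subset_closedBall hu.1))
      (hsph hpt) (hf0 _ hpt)
    have hh0 : ∀ z ∈ sphere c R, h z ≠ 0 := fun z hz h0 ↦ hf0 z hz (by rw [hfh, h0, mul_zero])
    have hn : n ≠ 0 := by
      rintro rfl
      exact hhu (by simpa [hfh] using hu.2)
    have hZh : {z ∈ ball c R | h z = 0} = Z := by
      rw [← Finset.erase_insert huZ, Finset.coe_erase, ← hZ]
      ext z
      rcases eq_or_ne z u with rfl | hzu
      · simp [hhu]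
      · simp [hfh, hzu, sub_eq_zero]
    obtain ⟨N, hN, hint⟩ := ih hh hh0 hZh
    refine ⟨n + N, by rw [Finset.card_insert_of_notMem huZ]; omega, ?_⟩
    rw [show f = fun z ↦ (z - u) ^ n * h z from funext hfh,
      hh.circleIntegral_logDeriv_pow_mul hU hsph hh0 hu.1, hint]
    push_cast
    ring

theorem DifferentiableOn.circleIntegral_logDeriv_eq_two_pi_I (hf : DifferentiableOn ℂ f U)
    (hU : IsOpen U) (hR : 0 < R) (hRU : sphere c R ⊆ U)
    (hslit : ∀ z ∈ sphere c R, f z / (z - c) ∈ slitPlane) :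
    ∮ z in C(c, R), logDeriv f z = 2 * π * I := by
  have hf0 : ∀ z ∈ sphere c R, f z ≠ 0 := fun z hz h0 ↦
    slitPlane_ne_zero (hslit z hz) (by rw [h0, zero_div])
  have hzc : ∀ z ∈ sphere c R, z - c ≠ 0 := fun z hz h0 ↦
    slitPlane_ne_zero (hslit z hz) (by rw [h0, div_zero])
  have hlog : ∀ z ∈ sphere c R, HasDerivWithinAt (fun z ↦ Complex.log (f z / (z - c)))
      (logDeriv f z - (z - c)⁻¹) (sphere c R) z := by
    intro z hz
    have hd := (((hf.differentiableAt (hU.mem_nhds (hRU hz))).hasDerivAt.div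
      ((hasDerivAt_id z).sub_const c) (hzc z hz)).clog (hslit z hz))
    refine hd.hasDerivWithinAt.congr_deriv ?_
    simp only [logDeriv_apply, Pi.div_apply, id]
    field_simp [hf0 z hz, hzc z hz]
  have hinv : CircleIntegrable (fun z ↦ (z - c)⁻¹) c R :=
    ContinuousOn.circleIntegrable hR.le fun z hz ↦
      ((continuousAt_id.sub continuousAt_const).inv₀ (hzc z hz)).continuousWithinAt
  have := circleIntegral.integral_eq_zero_of_hasDerivWithinAt hR.le hlog
  rwa [circleIntegral.integral_sub (hf.circleIntegrable_logDeriv hU hR.le hRU hf0) hinv,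
    circleIntegral.integral_sub_center_inv c hR.ne', sub_eq_zero] at this

theorem DifferentiableOn.existsUnique_zero_of_div_mem_slitPlane (hf : DifferentiableOn ℂ f U)
    (hU : IsOpen U) (hU' : IsPreconnected U) (hR : 0 < R) (hRU : closedBall c R ⊆ U)
    (hslit : ∀ z ∈ sphere c R, f z / (z - c) ∈ slitPlane) :
    ∃! z, z ∈ ball c R ∧ f z = 0 := by
  have hsph : sphere c R ⊆ U := sphere_subset_closedBall.trans hRU
  have hf0 : ∀ z ∈ sphere c R, f z ≠ 0 := fun z hz h0 ↦
    slitPlane_ne_zero (hslit z hz) (by rw [h0, zero_div])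
  have hpt : c + R ∈ sphere c R := by simp [abs_of_pos hR]
  have hfin : {z ∈ ball c R | f z = 0}.Finite :=
    (hf.finite_zeros_of_isCompact hU hU' (hsph hpt) (hf0 _ hpt) (isCompact_closedBall c R)
      hRU).subset fun z hz ↦ ⟨ball_subset_closedBall hz.1, hz.2⟩
  have hwind := hf.circleIntegral_logDeriv_eq_two_pi_I hU hR hsph hslit
  obtain ⟨N, hN, hint⟩ :=
    hf.exists_circleIntegral_logDeriv_eq_nat_mul hU hU' hR.le hRU hf0 hfin.coe_toFinset.symm
  have hN1 : N = 1 := by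
    rw [hwind, eq_comm, mul_eq_right₀ two_pi_I_ne_zero] at hint
    exact_mod_cast hint
  obtain ⟨z₀, hz₀⟩ : {z ∈ ball c R | f z = 0}.Nonempty := by
    by_contra hempty
    exact two_pi_I_ne_zero <| hwind.symm.trans <| hf.circleIntegral_logDeriv_eq_zero hU hR.le hRU
      (fun z hz hfz ↦ hempty ⟨z, hz, hfz⟩) hf0
  refine ⟨z₀, hz₀, fun z hz ↦ Finset.card_le_one.1 (hN1 ▸ hN) z ?_ z₀ ?_⟩ <;> simpa

end ArgumentPrinciple

theorem Complex.re_div_eq_re_mul_conj_div (a z : ℂ) : (a / z).re = (a * conj z).re / ‖z‖ ^ 2 := by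
  rw [div_eq_mul_inv, inv_def, ← mul_assoc, re_mul_ofReal, normSq_eq_norm_sq, div_eq_mul_inv]

theorem eventually_nhdsLT_one_of_annulus {P : ℂ → Prop} {ε : ℝ} (hε : 0 < ε)
    (h : ∀ ζ : ℂ, 1 - ε < ‖ζ‖ → ‖ζ‖ < 1 → P ζ) :
    ∀ᶠ t in 𝓝[<] (1 : ℝ), ∀ ζ : ℂ, ‖ζ‖ = t → P ζ :=
  mem_of_superset (Ioo_mem_nhdsLT (by linarith)) fun _ ht ζ hζ ↦ h ζ (hζ ▸ ht.1) (hζ ▸ ht.2)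

theorem existsUnique_sub_sub_mul_eq_zero {g : ℂ → ℂ} {b : ℝ}
    (hg : DifferentiableOn ℂ g (ball 0 1))
    (hb : ∀ᶠ t in 𝓝[<] (1 : ℝ), ∀ ζ : ℂ, ‖ζ‖ = t → (g ζ * conj ζ).re ≤ b * (1 - ‖ζ‖ ^ 2))
    {w : ℂ} (hw : w ∈ ball (0 : ℂ) 1) {r : ℝ} (hr : 0 ≤ r) :
    ∃! ζ, ζ ∈ ball (0 : ℂ) 1 ∧ ζ - w - r * g ζ = 0 := by
  set f : ℂ → ℂ := fun ζ ↦ ζ - w - r * g ζ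
  have hw1 : ‖w‖ < 1 := mem_ball_zero_iff.1 hw
  have hφ : ∀ᶠ t in 𝓝 (1 : ℝ), 0 < t ^ 2 - ‖w‖ * t - r * b * (1 - t ^ 2) :=
    continuousAt_const.eventually_lt (by fun_prop) (by simpa using hw1)
  have hpos : ∀ᶠ t in 𝓝[<] (1 : ℝ), 0 < t ∧ ∀ ζ : ℂ, ‖ζ‖ = t → 0 < (f ζ * conj ζ).re := by
    filter_upwards [nhdsWithin_le_nhds hφ, hb, Ioo_mem_nhdsLT one_pos] with t hφt hbt ht
    refine ⟨ht.1, fun ζ hζ ↦ ?_⟩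
    have hexpand : (f ζ * conj ζ).re = ‖ζ‖ ^ 2 - (w * conj ζ).re - r * (g ζ * conj ζ).re := by
      simp [f, sub_mul, mul_assoc, mul_conj, normSq_eq_norm_sq, -ofReal_pow]
    have hwζ : (w * conj ζ).re ≤ ‖w‖ * ‖ζ‖ := by
      simpa using re_le_norm (w * conj ζ)
    have hgζ := mul_le_mul_of_nonneg_left (hbt ζ hζ) hr
    subst hζ
    nlinarith
  obtain ⟨s, hs1, hsub⟩ := mem_nhdsLT_iff_exists_Ico_subset.1 hpos
  have hs : 0 < s := (hsub ⟨le_rfl, hs1⟩).1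
  have hf : DifferentiableOn ℂ f (ball 0 1) :=
    (differentiableOn_id.sub_const w).sub (hg.const_mul _)
  obtain ⟨ζ₀, ⟨hζ₀, hfζ₀⟩, huniq⟩ := hf.existsUnique_zero_of_div_mem_slitPlane isOpen_ball
    (convex_ball 0 1).isPreconnected hs (closedBall_subset_ball hs1) fun z hz ↦ by
      have hz : ‖z‖ = s := mem_sphere_zero_iff_norm.1 hz
      rw [sub_zero, mem_slitPlane_iff, re_div_eq_re_mul_conj_div]
      exact Or.inl (div_pos ((hsub ⟨hz.ge, hz ▸ hs1⟩).2 z rfl) (pow_pos (hz ▸ hs) 2))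
  refine ⟨ζ₀, ⟨ball_subset_ball hs1.le hζ₀, hfζ₀⟩, fun ζ ⟨hζ, hfζ⟩ ↦ huniq ζ ⟨?_, hfζ⟩⟩
  by_contra hout
  have hζs : s ≤ ‖ζ‖ := by simpa using hout
  have := (hsub ⟨hζs, mem_ball_zero_iff.1 hζ⟩).2 ζ rfl
  simp [f, hfζ] at this

theorem re_nonneg_of_eventually_neg_lt_re {F : ℂ → ℂ} (hF : DifferentiableOn ℂ F (ball 0 1))
    (h : ∀ δ > 0, ∀ᶠ t in 𝓝[<] (1 : ℝ), ∀ ζ : ℂ, ‖ζ‖ = t → -δ < (F ζ).re) :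
    ∀ ζ ∈ ball (0 : ℂ) 1, 0 ≤ (F ζ).re := by
  intro ζ₀ hζ₀
  by_contra! hneg
  obtain ⟨t, hδ, hζ₀t, ht1⟩ :=
    ((h (-(F ζ₀).re / 2) (by linarith)).and (Ioo_mem_nhdsLT (mem_ball_zero_iff.1 hζ₀))).exists
  have ht : t ≠ 0 := ((norm_nonneg _).trans_lt hζ₀t).ne'
  have hexp : DiffContOnCl ℂ (fun z ↦ exp (-F z)) (ball 0 t) := by
    refine (hF.mono ?_).neg.cexp.diffContOnCl
    rw [closure_ball 0 ht]
    exact closedBall_subset_ball ht1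
  have hmax : ‖exp (-F ζ₀)‖ ≤ Real.exp (-(F ζ₀).re / 2) := by
    refine norm_le_of_forall_mem_frontier_norm_le isBounded_ball hexp (fun z hz ↦ ?_)
      (subset_closure (mem_ball_zero_iff.2 hζ₀t))
    rw [frontier_ball 0 ht, mem_sphere_zero_iff_norm] at hz
    rw [norm_exp, neg_re, Real.exp_le_exp]
    linarith [hδ z hz]
  rw [norm_exp, neg_re, Real.exp_le_exp] at hmax
  linarith

theorem exists_berksonPorta_representation {g : ℂ → ℂ} {b : ℝ}
    (hg : DifferentiableOn ℂ g (ball 0 1))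
    (hb : ∀ᶠ t in 𝓝[<] (1 : ℝ), ∀ ζ : ℂ, ‖ζ‖ = t → (g ζ * conj ζ).re ≤ b * (1 - ‖ζ‖ ^ 2)) :
    ∃ q : ℂ → ℂ, DifferentiableOn ℂ q (ball 0 1) ∧ (∀ ζ ∈ ball (0 : ℂ) 1, 0 ≤ (q ζ).re) ∧
      ∀ ζ ∈ ball (0 : ℂ) 1, g ζ = g 0 - conj (g 0) * ζ ^ 2 - ζ * q ζ := by
  set H : ℂ → ℂ := fun ζ ↦ g 0 - conj (g 0) * ζ ^ 2 - g ζ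
  have hH : DifferentiableOn ℂ H (ball 0 1) := by fun_prop
  have hqH : ∀ ζ, ζ * dslope H 0 ζ = H ζ := fun ζ ↦ by simpa [H] using sub_smul_dslope H 0 ζ
  have hre : ∀ ζ, ((dslope H 0 ζ).re) * ‖ζ‖ ^ 2
      = (g 0 * conj ζ).re * (1 - ‖ζ‖ ^ 2) - (g ζ * conj ζ).re := by
    intro ζ
    rcases eq_or_ne ζ 0 with rfl | hζ
    · simp
    have hdslope : dslope H 0 ζ = H ζ / ζ := eq_div_of_mul_eq hζ (by rw [mul_comm, hqH])
    have hHζ : H ζ * conj ζ = g 0 * conj ζ - conj (g 0 * conj ζ) * (ζ * conj ζ) - g ζ * conj ζ := by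
      simp only [H, map_mul, conj_conj]
      ring
    rw [hdslope, re_div_eq_re_mul_conj_div, div_mul_cancel₀ _ (by positivity), hHζ, mul_conj,
      normSq_eq_norm_sq, sub_re, sub_re, re_mul_ofReal, conj_re]
    ring
  have hq : DifferentiableOn ℂ (dslope H 0) (ball 0 1) :=
    (differentiableOn_dslope (isOpen_ball.mem_nhds (mem_ball_self one_pos))).2 hH
  refine ⟨dslope H 0, hq, re_nonneg_of_eventually_neg_lt_re hq ?_, fun ζ _ ↦ by rw [hqH]; ring⟩
  intro δ hδ
  have hψ : ∀ᶠ t in 𝓝 (1 : ℝ), (‖g 0‖ + b) * (1 - t ^ 2) < δ * t ^ 2 :=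
    ContinuousAt.eventually_lt (f := fun t ↦ (‖g 0‖ + b) * (1 - t ^ 2)) (g := fun t ↦ δ * t ^ 2)
      (by fun_prop) (by fun_prop) (by simpa using hδ)
  filter_upwards [nhdsWithin_le_nhds hψ, hb, Ioo_mem_nhdsLT one_pos] with t hψt hbt ht ζ hζ
  subst hζ
  have hζ1 : 0 ≤ 1 - ‖ζ‖ ^ 2 := by nlinarith [ht.1, ht.2]
  have hg0 : -‖g 0‖ ≤ (g 0 * conj ζ).re := by
    have := (abs_re_le_norm (g 0 * conj ζ)).trans_eq (by rw [norm_mul, norm_conj])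
    nlinarith [neg_abs_le (g 0 * conj ζ).re, mul_le_mul_of_nonneg_left ht.2.le (norm_nonneg (g 0))]
  have key : -δ * ‖ζ‖ ^ 2 < (dslope H 0 ζ).re * ‖ζ‖ ^ 2 := by
    nlinarith [hre ζ, hbt ζ rfl, mul_le_mul_of_nonneg_right hg0 hζ1]
  exact lt_of_mul_lt_mul_right key (sq_nonneg _)

theorem stmt8 (g : ℂ → ℂ) (hg : DifferentiableOn ℂ g (ball 0 1))
    (ε b : ℝ) (hε : 0 < ε)
    (hineq : ∀ ζ : ℂ, 1 - ε < ‖ζ‖ → ‖ζ‖ < 1 →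
      (g ζ * (starRingEnd ℂ) ζ).re ≤ b * (1 - ‖ζ‖ ^ 2)) :
    (∀ w ∈ ball (0:ℂ) 1, ∀ r : ℝ, 0 < r →
      ∃! ζ, ζ ∈ ball (0:ℂ) 1 ∧ ζ - w - (r : ℂ) * g ζ = 0) ∧
    ∃ q : ℂ → ℂ, DifferentiableOn ℂ q (ball 0 1) ∧
      (∀ ζ ∈ ball (0:ℂ) 1, 0 ≤ (q ζ).re) ∧
      ∀ ζ ∈ ball (0:ℂ) 1, g ζ = g 0 - (starRingEnd ℂ) (g 0) * ζ ^ 2 - ζ * q ζ := by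
  have hb := eventually_nhdsLT_one_of_annulus hε hineq
  exact ⟨fun w hw r hr ↦ existsUnique_sub_sub_mul_eq_zero hg hb hw hr.le,
    exists_berksonPorta_representation hg hb⟩
end

section
/- For the function k(x) = x^{x/(x−1)} on [2, ∞), one has k''(x) < 0 for all x ≥ 2 wherever defined, and hence k(x) ≤ k'(2)·(x − 2) + k(2) = 4(1 − ln 2)·x + 4 − 8(1 − ln 2) for all x ≥ 2. -/
/-!
Write `k = exp ∘ g` with `g x = log x * (x / (x - 1))`. Then `k'' = k (g'' + g'^2)`, which simplifies to
`k x * (x * log x ^ 2 - (x - 1) ^ 2) / (x * (x - 1) ^ 4)`. For `x = u ^ 2 > 1` the numerator is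
negative because `2 log u < u - u⁻¹` (both sides vanish at `u = 1`, and the right-hand side grows
faster). Hence `k` is concave on `(1, ∞)` and lies below its tangent line at `2`, where `k 2 = 4` and
`k' 2 = 4 (1 - log 2)`.
-/

open Real Set

lemma two_mul_log_lt_sub_inv {u : ℝ} (hu : 1 < u) : 2 * log u < u - u⁻¹ := by
  let φ : ℝ → ℝ := fun u ↦ u - u⁻¹ - 2 * log u
  have hφ' : ∀ v : ℝ, 0 < v → HasDerivAt φ ((v - 1) ^ 2 / v ^ 2) v := fun v hv ↦ by
    refine (((hasDerivAt_id' v).sub (hasDerivAt_inv hv.ne')).sub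
      ((hasDerivAt_log hv.ne').const_mul 2)).congr_deriv ?_
    field_simp
    ring
  have hmono : StrictMonoOn φ (Ici 1) := by
    refine strictMonoOn_of_deriv_pos (convex_Ici 1) (fun v hv ↦ ?_) fun v hv ↦ ?_
    · exact (hφ' v (zero_lt_one.trans_le hv)).continuousAt.continuousWithinAt
    · rw [interior_Ici] at hv
      rw [(hφ' v (zero_lt_one.trans hv)).deriv]
      exact div_pos (pow_pos (sub_pos.mpr hv) 2) (pow_pos (zero_lt_one.trans hv) 2)
  have := hmono self_mem_Ici hu.le hu
  simp only [φ, inv_one, log_one] at this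
  linarith

lemma mul_log_sq_lt_sub_one_sq {x : ℝ} (hx : 1 < x) : x * log x ^ 2 < (x - 1) ^ 2 := by
  set u := √x
  have hu : 1 < u := lt_sqrt_of_sq_lt (by simpa using hx)
  have hux : u ^ 2 = x := sq_sqrt (by linarith)
  have hlog : log x = 2 * log u := by rw [← hux, log_pow]; push_cast; ring
  have key : u * log x < x - 1 := by
    calc u * log x = u * (2 * log u) := by rw [hlog]
      _ < u * (u - u⁻¹) := mul_lt_mul_of_pos_left (two_mul_log_lt_sub_inv hu) (by positivity)
      _ = x - 1 := by rw [← hux]; field_simp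
  have : 0 ≤ u * log x := mul_nonneg (by positivity) (log_nonneg hx.le)
  calc x * log x ^ 2 = (u * log x) ^ 2 := by rw [← hux]; ring
    _ < (x - 1) ^ 2 := by gcongr

noncomputable def harrisK (x : ℝ) : ℝ := x ^ (x / (x - 1))

lemma harrisK_eq_exp {x : ℝ} (hx : 0 < x) : harrisK x = exp (log x * (x / (x - 1))) :=
  rpow_def_of_pos hx _

lemma harrisK_two : harrisK 2 = 4 := by
  norm_num [harrisK]

lemma hasDerivAt_log_mul_div_sub_one {x : ℝ} (hx : 0 < x) (hx1 : x ≠ 1) :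
    HasDerivAt (fun y ↦ log y * (y / (y - 1))) ((x - 1 - log x) / (x - 1) ^ 2) x := by
  have hx1' : x - 1 ≠ 0 := sub_ne_zero.mpr hx1
  refine ((hasDerivAt_log hx.ne').mul
    ((hasDerivAt_id' x).div ((hasDerivAt_id' x).sub_const 1) hx1')).congr_deriv ?_
  simp only [Pi.div_apply]
  field_simp
  ring

lemma hasDerivAt_harrisK {x : ℝ} (hx : 0 < x) (hx1 : x ≠ 1) :
    HasDerivAt harrisK (harrisK x * ((x - 1 - log x) / (x - 1) ^ 2)) x := by
  rw [harrisK_eq_exp hx]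
  refine (hasDerivAt_log_mul_div_sub_one hx hx1).exp.congr_of_eventuallyEq ?_
  filter_upwards [lt_mem_nhds hx] with y hy using harrisK_eq_exp hy

lemma hasDerivAt_harrisK_two : HasDerivAt harrisK (4 * (1 - log 2)) 2 := by
  convert hasDerivAt_harrisK two_pos (by norm_num) using 1
  rw [harrisK_two]
  ring

lemma hasDerivAt_sub_one_sub_log_div {x : ℝ} (hx : 0 < x) (hx1 : x ≠ 1) :
    HasDerivAt (fun y ↦ (y - 1 - log y) / (y - 1) ^ 2)
      (((x - 1) ^ 2 / x - 2 * (x - 1 - log x)) / (x - 1) ^ 3) x := by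
  have hx1' : x - 1 ≠ 0 := sub_ne_zero.mpr hx1
  refine ((((hasDerivAt_id' x).sub_const 1).sub (hasDerivAt_log hx.ne')).div
    (((hasDerivAt_id' x).sub_const 1).pow 2) (pow_ne_zero 2 hx1')).congr_deriv ?_
  simp only [Pi.sub_apply, Pi.pow_apply]
  field_simp
  ring

lemma hasDerivAt_deriv_harrisK {x : ℝ} (hx : 0 < x) (hx1 : x ≠ 1) :
    HasDerivAt (deriv harrisK)
      (harrisK x * ((x * log x ^ 2 - (x - 1) ^ 2) / (x * (x - 1) ^ 4))) x := by
  have hderiv : deriv harrisK =ᶠ[nhds x]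
      fun y ↦ harrisK y * ((y - 1 - log y) / (y - 1) ^ 2) := by
    filter_upwards [lt_mem_nhds hx, eventually_ne_nhds hx1] with y hy hy1
    exact (hasDerivAt_harrisK hy hy1).deriv
  refine (((hasDerivAt_harrisK hx hx1).mul
    (hasDerivAt_sub_one_sub_log_div hx hx1)).congr_of_eventuallyEq hderiv).congr_deriv ?_
  field_simp
  ring

lemma deriv2_harrisK_neg {x : ℝ} (hx : 1 < x) : deriv (deriv harrisK) x < 0 := by
  have hx0 : 0 < x := zero_lt_one.trans hx
  rw [(hasDerivAt_deriv_harrisK hx0 hx.ne').deriv]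
  refine mul_neg_of_pos_of_neg (by rw [harrisK_eq_exp hx0]; positivity) ?_
  have : 0 < x - 1 := sub_pos.mpr hx
  exact div_neg_of_neg_of_pos (by linarith [mul_log_sq_lt_sub_one_sq hx]) (by positivity)

lemma strictConcaveOn_harrisK : StrictConcaveOn ℝ (Ioi 1) harrisK := by
  refine strictConcaveOn_of_deriv2_neg (convex_Ioi 1) (fun x hx ↦ ?_) fun x hx ↦ ?_
  · exact (hasDerivAt_harrisK (zero_lt_one.trans hx) (ne_of_gt hx)).continuousAt.continuousWithinAt
  · rw [interior_Ioi] at hx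
    simpa using deriv2_harrisK_neg hx

lemma ConcaveOn.le_add_mul_sub_of_hasDerivAt {S : Set ℝ} {f : ℝ → ℝ} {x y f' : ℝ}
    (hf : ConcaveOn ℝ S f) (hx : x ∈ S) (hy : y ∈ S) (hf' : HasDerivAt f f' x) :
    f y ≤ f x + f' * (y - x) := by
  rcases lt_trichotomy x y with hxy | rfl | hyx
  · have := hf.slope_le_of_hasDerivAt hx hy hxy hf'
    rw [slope_def_field, div_le_iff₀ (sub_pos.mpr hxy)] at this
    linarith
  · simp
  · have := hf.le_slope_of_hasDerivAt hy hx hyx hf'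
    rw [slope_def_field, le_div_iff₀ (sub_pos.mpr hyx)] at this
    linarith

theorem stmt10 :
    (∀ x : ℝ, 2 ≤ x → deriv (deriv (fun y : ℝ => y ^ (y / (y - 1)))) x < 0) ∧
    (∀ x : ℝ, 2 ≤ x →
      x ^ (x / (x - 1)) ≤ 4 * (1 - Real.log 2) * x + 4 - 8 * (1 - Real.log 2)) := by
  refine ⟨fun x hx ↦ deriv2_harrisK_neg (by linarith), fun x hx ↦ ?_⟩
  have htangent := strictConcaveOn_harrisK.concaveOn.le_add_mul_sub_of_hasDerivAt
    (show (2 : ℝ) ∈ Ioi 1 by norm_num) (show x ∈ Ioi 1 from lt_of_lt_of_le one_lt_two hx)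
    hasDerivAt_harrisK_two
  rw [harrisK_two] at htangent
  change harrisK x ≤ _
  linarith
end

section
/- Let X be a complex Banach space and P_m : X → X a continuous homogeneous polynomial of degree m ≥ 2. Then ‖P_m‖ := sup_{‖v‖=1} ‖P_m(v)‖ ≤ m^{m/(m−1)} · V(P_m), where V(P_m) = sup{|⟨P_m(v), v*⟩| : ‖v‖ = 1, v* a supporting functional at v}. For m = 1 (a bounded linear operator), ‖P_1‖ ≤ e·V(P_1). -/
/-!
Harris's argument. Let `P x = L (x, …, x)`, let `V` bound the numerical radius of `P` and fix
`a > V`. If `f` is a supporting functional at `y = x + h P x`, then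
`‖y‖ = |f y| ≤ ‖x‖ + |h| (V ‖y‖ ^ m + ‖P x - P y‖)`. Hence the Euler polygons
`Y ζ = (x ↦ x + (ζ / n) P x)^[n] v` of the flow of `P` stay below any solution of `W' = a W ^ m`,
`W 0 = 1`, on `[0, r]`, uniformly for `|ζ| ≤ r` once `n` is large. Each `Y` is entire with
`Y' 0 = P v`, so Cauchy's estimate gives `‖P v‖ ≤ W r / r`. For `m ≥ 2`, the solution
`W t = (1 - (m - 1) a t) ^ (-1 / (m - 1))` at `r = 1 / (m a)` gives `m ^ (m / (m - 1)) a`;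
for `m = 1`, `W t = exp (a t)` at `r = 1 / a` gives `e a`. Finally let `a ↓ V`.
-/

open Set Filter Topology

namespace ContinuousMultilinearMap

variable {𝕜 E F : Type*} [NontriviallyNormedField 𝕜] [NormedAddCommGroup E] [NormedSpace 𝕜 E]
  [NormedAddCommGroup F] [NormedSpace 𝕜 F] {m : ℕ}
  (L : ContinuousMultilinearMap 𝕜 (fun _ : Fin m => E) F)

def diagonal (x : E) : F := L fun _ => x

lemma norm_diagonal_le (x : E) : ‖L.diagonal x‖ ≤ ‖L‖ * ‖x‖ ^ m := by
  simpa [diagonal] using L.le_opNorm fun _ => x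

lemma diagonal_smul (c : 𝕜) (x : E) : L.diagonal (c • x) = c ^ m • L.diagonal x := by
  simp [diagonal, L.map_smul_univ]

lemma norm_diagonal_sub_le {x y : E} {B : ℝ} (hx : ‖x‖ ≤ B) (hy : ‖y‖ ≤ B) :
    ‖L.diagonal x - L.diagonal y‖ ≤ ‖L‖ * m * B ^ (m - 1) * ‖x - y‖ := by
  have hB : 0 ≤ B := (norm_nonneg x).trans hx
  have hdiag : ∀ z : E, ‖fun _ : Fin m => z‖ ≤ ‖z‖ := fun z =>
    (pi_norm_le_iff_of_nonneg (norm_nonneg z)).2 fun _ => le_rfl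
  calc ‖L.diagonal x - L.diagonal y‖
      ≤ ‖L‖ * m * max ‖fun _ : Fin m => x‖ ‖fun _ : Fin m => y‖ ^ (m - 1) *
        ‖(fun _ : Fin m => x) - fun _ => y‖ := by
        simpa only [diagonal, Fintype.card_fin] using L.norm_image_sub_le (fun _ => x) fun _ => y
    _ ≤ ‖L‖ * m * B ^ (m - 1) * ‖x - y‖ := by
        gcongr
        · exact max_le ((hdiag x).trans hx) ((hdiag y).trans hy)
        · exact hdiag (x - y)

lemma differentiable_diagonal : Differentiable 𝕜 L.diagonal := fun x =>
  (L.hasFDerivAt _).differentiableAt.comp x ((differentiable_pi.2 fun _ => differentiable_id) x)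

end ContinuousMultilinearMap

lemma add_pow_le_pow_add_mul {u d B : ℝ} (m : ℕ) (hu : 0 ≤ u) (hd : 0 ≤ d) (hB : u + d ≤ B) :
    (u + d) ^ m ≤ u ^ m + m * B ^ (m - 1) * d := by
  have h := (le_abs_self _).trans (abs_pow_sub_pow_le (u + d) u m)
  have hmax : max |u + d| |u| ≤ B := by
    rw [abs_of_nonneg hu, abs_of_nonneg (by positivity)]
    exact max_le hB (by linarith)
  calc (u + d) ^ m ≤ u ^ m + |u + d - u| * m * max |u + d| |u| ^ (m - 1) := by linarith
    _ = u ^ m + m * max |u + d| |u| ^ (m - 1) * d := by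
        rw [add_sub_cancel_left, abs_of_nonneg hd]; ring
    _ ≤ u ^ m + m * B ^ (m - 1) * d := by gcongr

lemma add_mul_mul_pow_le_of_hasDerivAt {W : ℝ → ℝ} {a r : ℝ} {m : ℕ} (ha : 0 ≤ a)
    (hW : ∀ s ∈ Icc 0 r, HasDerivAt W (a * W s ^ m) s) (hW0 : ∀ s ∈ Icc 0 r, 0 ≤ W s)
    {t η : ℝ} (ht : 0 ≤ t) (hη : 0 ≤ η) (htη : t + η ≤ r) :
    W t + η * (a * W t ^ m) ≤ W (t + η) := by
  have hcont : ContinuousOn W (Icc 0 r) := fun s hs => (hW s hs).continuousAt.continuousWithinAt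
  have hdiff : DifferentiableOn ℝ W (interior (Icc 0 r)) := fun s hs =>
    (hW s (interior_subset hs)).differentiableAt.differentiableWithinAt
  have hmono : MonotoneOn W (Icc 0 r) := monotoneOn_of_deriv_nonneg (convex_Icc 0 r) hcont hdiff
    fun s hs => by
      rw [(hW s (interior_subset hs)).deriv]
      have := hW0 s (interior_subset hs)
      positivity
  have hsub : Icc t (t + η) ⊆ Icc 0 r := Icc_subset_Icc ht htη
  have hgrowth := (convex_Icc t (t + η)).mul_sub_le_image_sub_of_le_deriv (C := a * W t ^ m)
    (hcont.mono hsub) (hdiff.mono (interior_mono hsub)) (fun s hs => by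
      have hs' := interior_subset hs
      rw [(hW s (hsub hs')).deriv]
      have hWt := hW0 t (hsub (left_mem_Icc.2 (by linarith)))
      gcongr
      exact hmono (hsub (left_mem_Icc.2 (by linarith))) (hsub hs') hs'.1)
    t (left_mem_Icc.2 (by linarith)) (t + η) (right_mem_Icc.2 (by linarith)) (by linarith)
  rw [add_sub_cancel_left] at hgrowth
  linarith

section Euler

variable {X : Type*} [NormedAddCommGroup X] [NormedSpace ℂ X]

def eulerStep (F : X → X) (h : ℂ) (x : X) : X := x + h • F x

lemma eulerStep_zero (F : X → X) : eulerStep F 0 = id := by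
  ext x; simp [eulerStep]

lemma differentiable_iterate_eulerStep {F : X → X} (hF : Differentiable ℂ F) (c : ℂ) (x : X)
    (k : ℕ) : Differentiable ℂ fun ζ : ℂ => (eulerStep F (ζ / c))^[k] x := by
  induction k with
  | zero => exact differentiable_const x
  | succ k ih =>
    simp only [Function.iterate_succ_apply', eulerStep]
    exact ih.add ((differentiable_id.div_const c).smul (hF.comp ih))

lemma hasDerivAt_iterate_eulerStep {F : X → X} {x : X} (hF : DifferentiableAt ℂ F x) (c : ℂ)
    (k : ℕ) : HasDerivAt (fun ζ : ℂ => (eulerStep F (ζ / c))^[k] x) ((k / c) • F x) 0 := by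
  induction k with
  | zero => simpa using hasDerivAt_const (0 : ℂ) x
  | succ k ih =>
    simp only [Function.iterate_succ_apply', eulerStep]
    have h0 : (eulerStep F (0 / c))^[k] x = x := by simp [eulerStep_zero]
    have hFk : HasDerivAt (fun ζ : ℂ => F ((eulerStep F (ζ / c))^[k] x)) _ 0 :=
      ((h0 ▸ hF).comp 0 ih.differentiableAt).hasDerivAt
    convert ih.fun_add (((hasDerivAt_id (0 : ℂ)).div_const c).fun_smul hFk) using 1
    · rfl
    · simp [eulerStep_zero, add_div, add_smul]

end Euler

section NumericalRange

variable {X : Type*} [NormedAddCommGroup X] [NormedSpace ℂ X]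

-- The paper's numerical radius `V(F)` is the supremum of this set.
def numericalRangeNorms (F : X → X) : Set ℝ :=
  {x | ∃ (w : X) (ws : X →L[ℂ] ℂ), ‖w‖ = 1 ∧ ws w = 1 ∧ ‖ws‖ = 1 ∧ x = ‖ws (F w)‖}

lemma exists_supporting_functional {v : X} (hv : ‖v‖ = 1) :
    ∃ f : X →L[ℂ] ℂ, ‖f‖ = 1 ∧ f v = 1 := by
  obtain ⟨f, hf, hfv⟩ := exists_dual_vector ℂ v (by simp [hv])
  exact ⟨f, hf, by simp [hfv, hv]⟩

lemma nonneg_of_mem_upperBounds_numericalRangeNorms {F : X → X} {V : ℝ} {v : X}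
    (hV : V ∈ upperBounds (numericalRangeNorms F)) (hv : ‖v‖ = 1) : 0 ≤ V := by
  obtain ⟨f, hf, hfv⟩ := exists_supporting_functional hv
  exact (norm_nonneg _).trans (hV ⟨v, f, hv, hfv, hf, rfl⟩)

lemma bddAbove_numericalRangeNorms {F : X → X} {C : ℝ} (hF : ∀ w, ‖w‖ = 1 → ‖F w‖ ≤ C) :
    BddAbove (numericalRangeNorms F) := by
  refine ⟨C, ?_⟩
  rintro _ ⟨w, f, hw, -, hf, rfl⟩
  calc ‖f (F w)‖ ≤ ‖f‖ * ‖F w‖ := f.le_opNorm _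
    _ ≤ C := by rw [hf, one_mul]; exact hF w hw

variable {m : ℕ} (L : ContinuousMultilinearMap ℂ (fun _ : Fin m => X) X) {V : ℝ}

lemma norm_supporting_diagonal_le (hV : V ∈ upperBounds (numericalRangeNorms L.diagonal))
    {y : X} (hy : y ≠ 0) {f : X →L[ℂ] ℂ} (hf : ‖f‖ = 1) (hfy : f y = ‖y‖) :
    ‖f (L.diagonal y)‖ ≤ V * ‖y‖ ^ m := by
  have hy' : (‖y‖ : ℂ) ≠ 0 := by simpa using hy
  set z : X := (‖y‖ : ℂ)⁻¹ • y
  have hz : ‖z‖ = 1 := by simp [z, norm_smul, hy]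
  have hfz : f z = 1 := by simp [z, hfy, hy']
  have hyz : y = (‖y‖ : ℂ) • z := by simp [z, smul_smul, hy']
  rw [hyz, L.diagonal_smul, map_smul, smul_eq_mul, norm_mul, norm_pow, ← hyz, mul_comm]
  simpa using mul_le_mul_of_nonneg_right (hV ⟨z, f, hz, hfz, hf, rfl⟩) (by positivity : 0 ≤ ‖y‖ ^ m)

lemma norm_eulerStep_diagonal_le (hV0 : 0 ≤ V)
    (hV : V ∈ upperBounds (numericalRangeNorms L.diagonal)) (h : ℂ) (x : X) :
    ‖eulerStep L.diagonal h x‖ ≤ ‖x‖ + ‖h‖ * (V * ‖eulerStep L.diagonal h x‖ ^ m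
      + ‖L.diagonal x - L.diagonal (eulerStep L.diagonal h x)‖) := by
  set y := eulerStep L.diagonal h x
  rcases eq_or_ne y 0 with hy | hy
  · rw [hy, norm_zero]
    positivity
  obtain ⟨f, hf, hfy⟩ := exists_dual_vector ℂ y (norm_ne_zero_iff.2 hy)
  have hfx : ‖f x‖ ≤ ‖x‖ := by simpa [hf] using f.le_opNorm x
  have hfP : ‖f (L.diagonal x - L.diagonal y)‖ ≤ ‖L.diagonal x - L.diagonal y‖ := by
    simpa [hf] using f.le_opNorm (L.diagonal x - L.diagonal y)
  have hPy := norm_supporting_diagonal_le L hV hy hf hfy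
  calc ‖y‖ = ‖f y‖ := by simp [hfy]
    _ = ‖f x + h * (f (L.diagonal y) + f (L.diagonal x - L.diagonal y))‖ := by
        simp [y, eulerStep]
    _ ≤ ‖x‖ + ‖h‖ * (V * ‖y‖ ^ m + ‖L.diagonal x - L.diagonal y‖) := by
        refine (norm_add_le _ _).trans ?_
        rw [norm_mul]
        gcongr
        exact (norm_add_le _ _).trans (add_le_add hPy hfP)

lemma norm_eulerStep_diagonal_le_of_le (hV0 : 0 ≤ V)
    (hV : V ∈ upperBounds (numericalRangeNorms L.diagonal)) {h : ℂ} {x : X} {τ w B ε : ℝ}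
    (hB : 0 ≤ B) (hh : ‖h‖ ≤ τ) (hx : ‖x‖ ≤ w) (hwB : w + τ * (‖L‖ * B ^ m) ≤ B)
    (hε : τ * ((V + ‖L‖) * m * B ^ (m - 1) * (‖L‖ * B ^ m)) ≤ ε) :
    ‖eulerStep L.diagonal h x‖ ≤ w + τ * (V * w ^ m + ε) := by
  set y := eulerStep L.diagonal h x
  set M := ‖L‖ * B ^ m with hMdef
  have hτ : 0 ≤ τ := (norm_nonneg h).trans hh
  have hM : 0 ≤ M := by positivity
  have hw : 0 ≤ w := (norm_nonneg x).trans hx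
  have hxB : ‖x‖ ≤ B := by nlinarith
  have hPx : ‖L.diagonal x‖ ≤ M := (L.norm_diagonal_le x).trans (by rw [hMdef]; gcongr)
  have hyx : ‖y - x‖ ≤ τ * M := by
    rw [show y - x = h • L.diagonal x by simp [y, eulerStep], norm_smul]
    gcongr
  have hy : ‖y‖ ≤ w + τ * M := by
    have := norm_le_norm_add_norm_sub' y x
    linarith
  have hPxy : ‖L.diagonal x - L.diagonal y‖ ≤ ‖L‖ * m * B ^ (m - 1) * (τ * M) := by
    refine (L.norm_diagonal_sub_le hxB (hy.trans hwB)).trans ?_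
    rw [norm_sub_rev]
    gcongr
  have hym : ‖y‖ ^ m ≤ w ^ m + m * B ^ (m - 1) * (τ * M) :=
    (pow_le_pow_left₀ (norm_nonneg y) hy m).trans
      (add_pow_le_pow_add_mul m hw (by positivity) hwB)
  calc ‖y‖ ≤ ‖x‖ + ‖h‖ * (V * ‖y‖ ^ m + ‖L.diagonal x - L.diagonal y‖) :=
        norm_eulerStep_diagonal_le L hV0 hV h x
    _ ≤ w + τ * (V * (w ^ m + m * B ^ (m - 1) * (τ * M)) + ‖L‖ * m * B ^ (m - 1) * (τ * M)) := by
        gcongr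
    _ = w + τ * (V * w ^ m + τ * ((V + ‖L‖) * m * B ^ (m - 1) * M)) := by ring
    _ ≤ w + τ * (V * w ^ m + ε) := by gcongr

lemma norm_iterate_eulerStep_diagonal_le (hV0 : 0 ≤ V)
    (hV : V ∈ upperBounds (numericalRangeNorms L.diagonal)) {h : ℂ} {x : X} {τ B ε : ℝ}
    (hB : 0 ≤ B) (hh : ‖h‖ ≤ τ)
    (hε : τ * ((V + ‖L‖) * m * B ^ (m - 1) * (‖L‖ * B ^ m)) ≤ ε)
    {n : ℕ} {w : ℕ → ℝ} (hx : ‖x‖ ≤ w 0) (hwB : ∀ k < n, w k + τ * (‖L‖ * B ^ m) ≤ B)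
    (hw : ∀ k < n, w k + τ * (V * w k ^ m + ε) ≤ w (k + 1)) :
    ‖(eulerStep L.diagonal h)^[n] x‖ ≤ w n := by
  suffices ∀ k ≤ n, ‖(eulerStep L.diagonal h)^[k] x‖ ≤ w k from this n le_rfl
  intro k hk
  induction k with
  | zero => exact hx
  | succ k ih =>
    rw [Function.iterate_succ_apply']
    exact (norm_eulerStep_diagonal_le_of_le L hV0 hV hB hh (ih (by omega)) (hwB k hk) hε).trans
      (hw k hk)

end NumericalRange

section Supersolution

variable {X : Type*} [NormedAddCommGroup X] [NormedSpace ℂ X]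
  {m : ℕ} (L : ContinuousMultilinearMap ℂ (fun _ : Fin m => X) X) {V : ℝ}

lemma exists_forall_norm_iterate_eulerStep_diagonal_le
    (hV : V ∈ upperBounds (numericalRangeNorms L.diagonal)) {v : X} (hv : ‖v‖ = 1)
    {a r : ℝ} (hVa : V < a) (hr : 0 < r) {W : ℝ → ℝ}
    (hW : ∀ s ∈ Icc 0 r, HasDerivAt W (a * W s ^ m) s) (hW1 : ∀ s ∈ Icc 0 r, 1 ≤ W s) :
    ∃ n : ℕ, 0 < n ∧ ∀ ζ : ℂ, ‖ζ‖ ≤ r → ‖(eulerStep L.diagonal (ζ / n))^[n] v‖ ≤ W r := by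
  have hV0 := nonneg_of_mem_upperBounds_numericalRangeNorms hV hv
  have ha : 0 ≤ a := by linarith
  have hW0 : ∀ s ∈ Icc 0 r, 0 ≤ W s := fun s hs => zero_le_one.trans (hW1 s hs)
  set B := W r + 1
  set M := ‖L‖ * B ^ m
  set K := (V + ‖L‖) * m * B ^ (m - 1) * M
  -- The slack `a - V` is what absorbs the second-order error of each Euler step.
  have hsuper : ∀ t η, 0 ≤ t → 0 ≤ η → t + η ≤ r →
      W t + η * (V * W t ^ m + (a - V)) ≤ W (t + η) := by
    intro t η ht hη htη
    have hWt : 1 ≤ W t ^ m := one_le_pow₀ (hW1 t ⟨ht, by linarith⟩)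
    have hgrowth := add_mul_mul_pow_le_of_hasDerivAt ha hW hW0 ht hη htη
    have hslack : V * W t ^ m + (a - V) ≤ a * W t ^ m := by nlinarith
    linarith [mul_le_mul_of_nonneg_left hslack hη]
  have hWr : ∀ t ∈ Icc 0 r, W t ≤ W r := fun t ht => by
    have hgrowth :=
      add_mul_mul_pow_le_of_hasDerivAt ha hW hW0 ht.1 (sub_nonneg.2 ht.2) (by linarith)
    rw [add_sub_cancel] at hgrowth
    have := mul_nonneg (sub_nonneg.2 ht.2) (mul_nonneg ha (pow_nonneg (hW0 t ht) m))
    linarith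
  have hτ : Tendsto (fun n : ℕ => r / n) atTop (𝓝 0) := tendsto_const_div_atTop_nhds_zero_nat r
  obtain ⟨n, hnM, hnK, hn⟩ := ((hτ.mul_const M).eventually_lt_const (by simp : 0 * M < 1)).and
    (((hτ.mul_const K).eventually_lt_const (by simpa using hVa : 0 * K < a - V)).and
      (eventually_gt_atTop 0)) |>.exists
  have hn' : (0 : ℝ) < n := by exact_mod_cast hn
  have hmem : ∀ k ≤ n, (k : ℝ) * (r / n) ∈ Icc 0 r := fun k hk => ⟨by positivity, by
    calc (k : ℝ) * (r / n) ≤ n * (r / n) := by gcongr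
      _ = r := by field_simp⟩
  refine ⟨n, hn, fun ζ hζ => ?_⟩
  have hbound := norm_iterate_eulerStep_diagonal_le L hV0 hV
    (add_nonneg (hW0 r (right_mem_Icc.2 hr.le)) zero_le_one)
    (x := v) (h := ζ / n) (τ := r / n) (B := B) (ε := a - V) (w := fun k => W (k * (r / n)))
    (by rw [norm_div, Complex.norm_natCast]; gcongr) hnK.le
    (by simpa [hv] using hW1 0 (left_mem_Icc.2 hr.le))
    (fun k hk => by
      have := hWr _ (hmem k hk.le)
      linarith)
    (fun k hk => by
      have := hsuper _ (r / n) (hmem k hk.le).1 (by positivity) (by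
        simpa [add_mul] using (hmem (k + 1) hk).2)
      simpa [add_mul] using this)
  rwa [mul_div_cancel₀ r hn'.ne'] at hbound

theorem norm_diagonal_le_div_of_hasDerivAt
    (hV : V ∈ upperBounds (numericalRangeNorms L.diagonal)) {v : X} (hv : ‖v‖ = 1)
    {a r : ℝ} (hVa : V < a) (hr : 0 < r) {W : ℝ → ℝ}
    (hW : ∀ s ∈ Icc 0 r, HasDerivAt W (a * W s ^ m) s) (hW1 : ∀ s ∈ Icc 0 r, 1 ≤ W s) :
    ‖L.diagonal v‖ ≤ W r / r := by
  obtain ⟨n, hn, hbound⟩ :=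
    exists_forall_norm_iterate_eulerStep_diagonal_le L hV hv hVa hr hW hW1
  have hderiv :
      HasDerivAt (fun ζ : ℂ => (eulerStep L.diagonal (ζ / n))^[n] v) (L.diagonal v) 0 := by
    simpa [hn.ne'] using hasDerivAt_iterate_eulerStep (L.differentiable_diagonal v) n n
  have hcauchy := Complex.norm_deriv_le_of_forall_mem_sphere_norm_le hr
    (differentiable_iterate_eulerStep L.differentiable_diagonal n v n).diffContOnCl
    fun ζ hζ => hbound ζ (mem_sphere_zero_iff_norm.1 hζ).le
  rwa [hderiv.deriv] at hcauchy

end Supersolution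

noncomputable def powMajorant (m : ℕ) (a t : ℝ) : ℝ :=
  (1 - ((m : ℝ) - 1) * a * t) ^ (-((m : ℝ) - 1)⁻¹)

section PowMajorant

variable {m : ℕ} {a t : ℝ}

lemma hasDerivAt_powMajorant (hm : 2 ≤ m) (ht : 0 < 1 - ((m : ℝ) - 1) * a * t) :
    HasDerivAt (powMajorant m a) (a * powMajorant m a t ^ m) t := by
  have hm' : (m : ℝ) - 1 ≠ 0 := by
    have : (2 : ℝ) ≤ m := by exact_mod_cast hm
    linarith
  have hbase : HasDerivAt (fun s => 1 - ((m : ℝ) - 1) * a * s) (-(((m : ℝ) - 1) * a)) t := by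
    simpa using ((hasDerivAt_id t).const_mul (((m : ℝ) - 1) * a)).const_sub 1
  convert hbase.rpow_const (p := -((m : ℝ) - 1)⁻¹) (Or.inl ht.ne') using 1
  · rfl
  rw [powMajorant, ← Real.rpow_natCast, ← Real.rpow_mul ht.le]
  have hexp : -((m : ℝ) - 1)⁻¹ * m = -((m : ℝ) - 1)⁻¹ - 1 := by field_simp; ring
  rw [hexp]
  field_simp

lemma one_le_powMajorant (hm : 1 ≤ m) (ha : 0 ≤ a) (ht0 : 0 ≤ t)
    (ht : 0 < 1 - ((m : ℝ) - 1) * a * t) : 1 ≤ powMajorant m a t := by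
  have hm' : (0 : ℝ) ≤ (m : ℝ) - 1 := by
    have : (1 : ℝ) ≤ m := by exact_mod_cast hm
    linarith
  refine Real.one_le_rpow_of_pos_of_le_one_of_nonpos ht ?_ ?_
  · have := mul_nonneg (mul_nonneg hm' ha) ht0
    linarith
  · have := inv_nonneg.2 hm'
    linarith

lemma one_sub_mul_pos_of_mem_Icc (hm : 1 ≤ m) (ha : 0 < a) (ht : t ∈ Icc 0 (1 / (m * a))) :
    0 < 1 - ((m : ℝ) - 1) * a * t := by
  have hm' : (1 : ℝ) ≤ m := by exact_mod_cast hm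
  have hmul : ((m : ℝ) - 1) * a * t ≤ ((m : ℝ) - 1) * a * (1 / (m * a)) :=
    mul_le_mul_of_nonneg_left ht.2 (mul_nonneg (by linarith) ha.le)
  have : ((m : ℝ) - 1) * a * (1 / (m * a)) = 1 - 1 / m := by field_simp
  have : (0 : ℝ) < 1 / m := by positivity
  linarith

lemma powMajorant_div_eq (hm : 2 ≤ m) (ha : 0 < a) :
    powMajorant m a (1 / (m * a)) / (1 / (m * a)) = (m : ℝ) ^ ((m : ℝ) / ((m : ℝ) - 1)) * a := by
  have hm' : (1 : ℝ) < m := by exact_mod_cast hm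
  have hm0 : (0 : ℝ) < m := by linarith
  have hbase : 1 - ((m : ℝ) - 1) * a * (1 / (m * a)) = (m : ℝ)⁻¹ := by field_simp; ring
  have hexp : (m : ℝ) / ((m : ℝ) - 1) = ((m : ℝ) - 1)⁻¹ + 1 := by
    field_simp [(sub_pos.2 hm').ne']; ring
  rw [powMajorant, hbase, Real.inv_rpow hm0.le, ← Real.rpow_neg hm0.le, neg_neg, hexp,
    Real.rpow_add hm0, Real.rpow_one]
  field_simp

end PowMajorant

section Harris

variable {X : Type*} [NormedAddCommGroup X] [NormedSpace ℂ X] {V : ℝ} {v : X}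

theorem norm_diagonal_le_of_two_le {m : ℕ} (L : ContinuousMultilinearMap ℂ (fun _ : Fin m => X) X)
    (hm : 2 ≤ m) (hV : V ∈ upperBounds (numericalRangeNorms L.diagonal)) (hv : ‖v‖ = 1) :
    ‖L.diagonal v‖ ≤ (m : ℝ) ^ ((m : ℝ) / ((m : ℝ) - 1)) * V := by
  have hK : 0 < (m : ℝ) ^ ((m : ℝ) / ((m : ℝ) - 1)) := by positivity
  refine (div_le_iff₀' hK).1 <| le_of_forall_gt_imp_ge_of_dense fun a hVa => (div_le_iff₀' hK).2 ?_
  have ha : 0 < a := (nonneg_of_mem_upperBounds_numericalRangeNorms hV hv).trans_lt hVa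
  rw [← powMajorant_div_eq hm ha]
  exact norm_diagonal_le_div_of_hasDerivAt L hV hv hVa (by positivity)
    (fun s hs => hasDerivAt_powMajorant hm (one_sub_mul_pos_of_mem_Icc (by omega) ha hs))
    (fun s hs => one_le_powMajorant (by omega) ha.le hs.1
      (one_sub_mul_pos_of_mem_Icc (by omega) ha hs))

theorem norm_apply_le_exp_one_mul (T : X →L[ℂ] X) (hV : V ∈ upperBounds (numericalRangeNorms T))
    (hv : ‖v‖ = 1) : ‖T v‖ ≤ Real.exp 1 * V := by
  set L := ContinuousMultilinearMap.ofSubsingleton ℂ X X (0 : Fin 1) T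
  have hL : L.diagonal = T := funext fun x => by simp [L, ContinuousMultilinearMap.diagonal]
  rw [← hL] at hV ⊢
  have hK : 0 < Real.exp 1 := Real.exp_pos 1
  refine (div_le_iff₀' hK).1 <| le_of_forall_gt_imp_ge_of_dense fun a hVa => (div_le_iff₀' hK).2 ?_
  have ha : 0 < a := (nonneg_of_mem_upperBounds_numericalRangeNorms hV hv).trans_lt hVa
  have hr : Real.exp (a * (1 / a)) / (1 / a) = Real.exp 1 * a := by field_simp
  rw [← hr]
  exact norm_diagonal_le_div_of_hasDerivAt L hV hv hVa (by positivity)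
    (fun s _ => by simpa [mul_comm] using ((hasDerivAt_id s).const_mul a).exp)
    (fun s hs => Real.one_le_exp (mul_nonneg ha.le hs.1))

end Harris

theorem stmt14 {X : Type*} [NormedAddCommGroup X] [NormedSpace ℂ X]
    (m : ℕ) (hm : 2 ≤ m) (P : X → X)
    (L : ContinuousMultilinearMap ℂ (fun _ : Fin m => X) X)
    (hP : ∀ v : X, P v = L (fun _ => v)) :
    (∀ v : X, ‖v‖ = 1 → ‖P v‖ ≤ (m : ℝ) ^ ((m : ℝ) / ((m : ℝ) - 1)) *
      sSup {x : ℝ | ∃ (w : X) (ws : X →L[ℂ] ℂ), ‖w‖ = 1 ∧ ws w = 1 ∧ ‖ws‖ = 1 ∧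
        x = ‖ws (P w)‖}) ∧
    (∀ T : X →L[ℂ] X, ∀ v : X, ‖v‖ = 1 → ‖T v‖ ≤ Real.exp 1 *
      sSup {x : ℝ | ∃ (w : X) (ws : X →L[ℂ] ℂ), ‖w‖ = 1 ∧ ws w = 1 ∧ ‖ws‖ = 1 ∧
        x = ‖ws (T w)‖}) := by
  obtain rfl : P = L.diagonal := funext hP
  have hbddL : BddAbove (numericalRangeNorms L.diagonal) :=
    bddAbove_numericalRangeNorms (C := ‖L‖) fun w hw =>
      (L.norm_diagonal_le w).trans_eq (by simp [hw])
  have hbddT (T : X →L[ℂ] X) : BddAbove (numericalRangeNorms T) :=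
    bddAbove_numericalRangeNorms (C := ‖T‖) fun w hw => (T.le_opNorm w).trans_eq (by simp [hw])
  exact ⟨fun v hv => norm_diagonal_le_of_two_le L hm (fun _ hx => le_csSup hbddL hx) hv,
    fun T v hv => norm_apply_le_exp_one_mul T (fun _ hx => le_csSup (hbddT T) hx) hv⟩
end

section
/- Let g : 𝔻 → ℂ be holomorphic with g(ζ) = g(0) − conj(g(0))ζ² − ζq(ζ), Re q ≥ 0 on 𝔻. Then for all ζ ∈ 𝔻: |g(ζ) − g(0)| ≤ 4|ζ|²·|g(0)| + e·|ζ|·|g'(0)| − 8·Re(g'(0))·|ζ|²·(1 − |ζ|·ln 2)/(1 − |ζ|)². -/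
/-! Since `g' 0 = -q 0`, the representation gives
`g ζ - g 0 = -conj (g 0) ζ² + ζ g' 0 - ζ (q ζ - q 0)`, and the last term is controlled by the
Carathéodory inequality `‖q ζ - q 0‖ ≤ 2 Re (q 0) ‖ζ‖ / (1 - ‖ζ‖)` for functions of nonnegative
real part. That inequality is the Schwarz lemma applied to the Cayley-type transform
`(q - q 0) / (q + conj (q 0))`, which maps the disc into itself when `Re q > 0`; the case
`Re q ≥ 0` follows by adding a small positive constant to `q`. The stated bound is weaker than
the resulting one termwise, because `1 ≤ 4`, `1 ≤ e`, and `2 (1 - r) ≤ 8 (1 - r log 2)`. -/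

open Complex Metric ComplexConjugate

namespace Complex

lemma norm_sub_lt_norm_add_conj {a b : ℂ} (ha : 0 < a.re) (hb : 0 < b.re) :
    ‖a - b‖ < ‖a + conj b‖ := by
  have hnormSq : normSq (a - b) < normSq (a + conj b) := by
    simp only [normSq_apply, sub_re, sub_im, add_re, add_im, conj_re, conj_im]
    nlinarith [mul_pos ha hb]
  rw [← sq_lt_sq₀ (norm_nonneg _) (norm_nonneg _), Complex.sq_norm, Complex.sq_norm]
  exact hnormSq

lemma one_sub_norm_mul_norm_sub_le_of_re_pos {p : ℂ → ℂ}
    (hp : DifferentiableOn ℂ p (ball 0 1)) (hre : ∀ w ∈ ball (0 : ℂ) 1, 0 < (p w).re)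
    {z : ℂ} (hz : z ∈ ball (0 : ℂ) 1) :
    (1 - ‖z‖) * ‖p z - p 0‖ ≤ 2 * (p 0).re * ‖z‖ := by
  have hre0 : 0 < (p 0).re := hre 0 (mem_ball_self one_pos)
  have hden : ∀ w ∈ ball (0 : ℂ) 1, p w + conj (p 0) ≠ 0 := fun w hw h => by
    have : 0 < (p w + conj (p 0)).re := by simpa using add_pos (hre w hw) hre0
    simp [h] at this
  set f : ℂ → ℂ := fun w => (p w - p 0) / (p w + conj (p 0))
  have hmaps : Set.MapsTo f (ball 0 1) (closedBall 0 1) := fun w hw => by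
    rw [mem_closedBall_zero_iff, norm_div,
      div_le_one (norm_pos_iff.mpr (hden w hw))]
    exact (norm_sub_lt_norm_add_conj (hre w hw) hre0).le
  have hschwarz : ‖f z‖ ≤ ‖z‖ :=
    norm_le_norm_of_mapsTo_ball ((hp.sub_const _).div (hp.add_const _) hden) hmaps
      (by simp [f]) (mem_ball_zero_iff.mp hz)
  have hden_le : ‖p z + conj (p 0)‖ ≤ ‖p z - p 0‖ + 2 * (p 0).re := by
    calc ‖p z + conj (p 0)‖ = ‖(p z - p 0) + (p 0 + conj (p 0))‖ := by ring_nf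
      _ ≤ ‖p z - p 0‖ + ‖p 0 + conj (p 0)‖ := norm_add_le _ _
      _ = ‖p z - p 0‖ + 2 * (p 0).re := by
        rw [add_conj, norm_real, Real.norm_of_nonneg (by positivity)]
  have hbound : ‖p z - p 0‖ ≤ ‖z‖ * (‖p z - p 0‖ + 2 * (p 0).re) :=
    calc ‖p z - p 0‖ = ‖f z‖ * ‖p z + conj (p 0)‖ := by
          rw [← norm_mul, div_mul_cancel₀ _ (hden z hz)]
      _ ≤ ‖z‖ * (‖p z - p 0‖ + 2 * (p 0).re) :=
        mul_le_mul hschwarz hden_le (norm_nonneg _) (norm_nonneg _)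
  linarith

lemma one_sub_norm_mul_norm_sub_le_of_re_nonneg {q : ℂ → ℂ}
    (hq : DifferentiableOn ℂ q (ball 0 1)) (hre : ∀ w ∈ ball (0 : ℂ) 1, 0 ≤ (q w).re)
    {z : ℂ} (hz : z ∈ ball (0 : ℂ) 1) :
    (1 - ‖z‖) * ‖q z - q 0‖ ≤ 2 * (q 0).re * ‖z‖ := by
  refine le_of_forall_pos_le_add fun ε hε => ?_
  have h := one_sub_norm_mul_norm_sub_le_of_re_pos (p := fun w => q w + (ε / 2 : ℝ))
    (hq.add_const _)
    (fun w hw => by simpa using add_pos_of_nonneg_of_pos (hre w hw) (half_pos hε)) hz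
  simp only [add_sub_add_right_eq_sub, add_re, ofReal_re] at h
  nlinarith [mem_ball_zero_iff.mp hz]

end Complex

lemma hasDerivAt_sub_sub_mul_at_zero {q : ℂ → ℂ} (hq : DifferentiableAt ℂ q 0) (c d : ℂ) :
    HasDerivAt (fun ζ => c - d * ζ ^ 2 - ζ * q ζ) (-q 0) 0 := by
  have hsq : HasDerivAt (fun ζ : ℂ => d * ζ ^ 2) 0 0 := by
    simpa using (hasDerivAt_pow 2 (0 : ℂ)).const_mul d
  exact (((hasDerivAt_const (0 : ℂ) c).sub hsq).sub
    ((hasDerivAt_id' 0).mul hq.hasDerivAt)).congr_deriv (by simp)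

lemma norm_sub_sub_mul_le (c d ζ w w₀ : ℂ) :
    ‖(c - d * ζ ^ 2 - ζ * w) - c‖ ≤ ‖ζ‖ ^ 2 * ‖d‖ + ‖ζ‖ * ‖w₀‖ + ‖ζ‖ * ‖w - w₀‖ := by
  calc ‖(c - d * ζ ^ 2 - ζ * w) - c‖ = ‖-(d * ζ ^ 2) + ζ * -w₀ + ζ * -(w - w₀)‖ := by ring_nf
    _ ≤ ‖-(d * ζ ^ 2)‖ + ‖ζ * -w₀‖ + ‖ζ * -(w - w₀)‖ := norm_add₃_le
    _ = ‖ζ‖ ^ 2 * ‖d‖ + ‖ζ‖ * ‖w₀‖ + ‖ζ‖ * ‖w - w₀‖ := by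
      simp only [norm_neg, norm_mul, norm_pow]; ring

lemma mul_le_eight_mul_sq_mul_one_sub_mul_log_two_div_sq {r A N : ℝ} (hr₀ : 0 ≤ r) (hr₁ : r < 1)
    (hA : 0 ≤ A) (hN : (1 - r) * N ≤ 2 * A * r) :
    r * N ≤ 8 * A * r ^ 2 * (1 - r * Real.log 2) / (1 - r) ^ 2 := by
  have h1r : 0 < 1 - r := by linarith
  have hlog : Real.log 2 < 1 := by linarith [Real.log_two_lt_d9]
  rw [le_div_iff₀ (by positivity)]
  have hfactor : 2 * (1 - r) ≤ 8 * (1 - r * Real.log 2) := by nlinarith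
  calc r * N * (1 - r) ^ 2 = r * (1 - r) * ((1 - r) * N) := by ring
    _ ≤ r * (1 - r) * (2 * A * r) := by gcongr
    _ = A * r ^ 2 * (2 * (1 - r)) := by ring
    _ ≤ A * r ^ 2 * (8 * (1 - r * Real.log 2)) := by gcongr
    _ = 8 * A * r ^ 2 * (1 - r * Real.log 2) := by ring

theorem stmt15_general (g q : ℂ → ℂ)
    (hq : DifferentiableOn ℂ q (ball 0 1))
    (hrep : ∀ ζ ∈ ball (0:ℂ) 1, g ζ = g 0 - (starRingEnd ℂ) (g 0) * ζ ^ 2 - ζ * q ζ)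
    (hre : ∀ ζ ∈ ball (0:ℂ) 1, 0 ≤ (q ζ).re) :
    ∀ ζ ∈ ball (0:ℂ) 1,
      ‖g ζ - g 0‖ ≤ 4 * ‖ζ‖ ^ 2 * ‖g 0‖ + Real.exp 1 * ‖ζ‖ * ‖deriv g 0‖
        - 8 * (deriv g 0).re * ‖ζ‖ ^ 2 * (1 - ‖ζ‖ * Real.log 2) / (1 - ‖ζ‖) ^ 2 := by
  have hball : ball (0 : ℂ) 1 ∈ nhds 0 := ball_mem_nhds 0 one_pos
  have hderiv : deriv g 0 = -q 0 :=
    ((hasDerivAt_sub_sub_mul_at_zero (hq.differentiableAt hball) _ _).congr_of_eventuallyEq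
      (Filter.eventually_of_mem hball hrep)).deriv
  intro ζ hζ
  have hr₁ : ‖ζ‖ < 1 := mem_ball_zero_iff.mp hζ
  have htriangle := norm_sub_sub_mul_le (g 0) (conj (g 0)) ζ (q ζ) (q 0)
  rw [← hrep ζ hζ, RCLike.norm_conj] at htriangle
  have htail := mul_le_eight_mul_sq_mul_one_sub_mul_log_two_div_sq (norm_nonneg ζ) hr₁
    (hre 0 (mem_ball_self one_pos)) (one_sub_norm_mul_norm_sub_le_of_re_nonneg hq hre hζ)
  have he : 1 ≤ Real.exp 1 := by linarith [Real.add_one_le_exp 1]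
  rw [hderiv, norm_neg, neg_re, mul_neg, neg_mul, neg_mul, neg_div, sub_neg_eq_add]
  nlinarith [mul_le_mul_of_nonneg_right he (mul_nonneg (norm_nonneg ζ) (norm_nonneg (q 0))),
    mul_nonneg (sq_nonneg ‖ζ‖) (norm_nonneg (g 0))]

theorem stmt15 (g q : ℂ → ℂ)
    (hg : DifferentiableOn ℂ g (ball 0 1))
    (hq : DifferentiableOn ℂ q (ball 0 1))
    (hrep : ∀ ζ ∈ ball (0:ℂ) 1, g ζ = g 0 - (starRingEnd ℂ) (g 0) * ζ ^ 2 - ζ * q ζ)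
    (hre : ∀ ζ ∈ ball (0:ℂ) 1, 0 ≤ (q ζ).re) :
    ∀ ζ ∈ ball (0:ℂ) 1,
      ‖g ζ - g 0‖ ≤ 4 * ‖ζ‖ ^ 2 * ‖g 0‖ + Real.exp 1 * ‖ζ‖ * ‖deriv g 0‖
        - 8 * (deriv g 0).re * ‖ζ‖ ^ 2 * (1 - ‖ζ‖ * Real.log 2) / (1 - ‖ζ‖) ^ 2 :=
  stmt15_general g q hq hrep hre
end
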